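/- Let f₁,...,fₙ : [0,1] → ℝ be continuous and let λ₁(t) ≤ ... ≤ λₙ(t) be given continuous functions. Then the total variation of the argument (counted in turns) of the path t ↦ ∏_{k=1}^{n} (λ_k(t)+i)²/(1+λ_k(t)²) in the unit circle is at most n. -/

import Mathlib

/-!
Each factor equals `exp (2 i arg (λ + i))` with `arg (λ + i) ∈ [0, π]`, so
`φ t = ∑ₖ arg (λₖ t + i) / π` is a continuous lift of the path with values in `[0, n]`.
Two continuous lifts of the same path differ by a continuous integer-valued, hence constant,
function, so `θ 1 - θ 0 = φ 1 - φ 0 ∈ [-n, n]`.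
-/

open Complex Set
open scoped Real

namespace Complex

lemma ofReal_add_I_sq_div_one_add_sq (x : ℝ) :
    ((x : ℂ) + I) ^ 2 / (1 + (x : ℂ) ^ 2) = exp (2 * arg (x + I) * I) := by
  have hnorm : ((‖(x : ℂ) + I‖ : ℝ) : ℂ) ^ 2 = 1 + (x : ℂ) ^ 2 := by
    rw [← ofReal_pow, Complex.sq_norm, normSq_apply]
    push_cast
    simp only [add_re, ofReal_re, I_re, add_zero, add_im, ofReal_im, I_im, zero_add, ofReal_one, mul_one]
    ring
  have hne : ((‖(x : ℂ) + I‖ : ℝ) : ℂ) ≠ 0 := by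
    rw [ofReal_ne_zero, norm_ne_zero_iff]
    intro h
    simpa using congrArg im h
  rw [← hnorm, div_eq_iff (pow_ne_zero 2 hne)]
  conv_lhs => rw [← norm_mul_exp_arg_mul_I ((x : ℂ) + I)]
  rw [mul_pow, ← exp_nat_mul]
  push_cast
  ring_nf

lemma arg_ofReal_add_I_div_pi_mem_Icc (x : ℝ) : arg (x + I) / π ∈ Icc 0 1 := by
  rw [mem_Icc, div_le_one Real.pi_pos]
  exact ⟨div_nonneg (arg_nonneg_iff.2 (by simp)) Real.pi_pos.le, arg_le_pi _⟩

lemma continuous_arg_ofReal_add_I : Continuous fun x : ℝ => arg (x + I) :=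
  continuous_iff_continuousAt.2 fun x =>
    (continuousAt_arg (by simp [mem_slitPlane_iff])).comp
      (continuous_ofReal.add continuous_const).continuousAt

end Complex

lemma isDiscrete_range_intCast : IsDiscrete (range ((↑) : ℤ → ℝ)) := by
  rw [← image_univ]
  exact IsDiscrete.univ.image Int.isClosedEmbedding_coe_real.isInducing

theorem IsPreconnected.sub_eq_sub_of_exp_eq {X : Type*} [TopologicalSpace X] {s : Set X}
    (hs : IsPreconnected s) {f g : X → ℝ} (hf : ContinuousOn f s) (hg : ContinuousOn g s)
    (hfg : ∀ t ∈ s, exp (2 * π * I * f t) = exp (2 * π * I * g t)) {x y : X}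
    (hx : x ∈ s) (hy : y ∈ s) : f x - g x = f y - g y := by
  refine hs.constant_of_mapsTo isDiscrete_range_intCast (hf.sub hg) (fun t ht => ?_) hx hy
  obtain ⟨m, hm⟩ := exp_eq_exp_iff_exists_int.1 (hfg t ht)
  refine ⟨m, ?_⟩
  have h2piI : (2 * π * I : ℂ) ≠ 0 := by simp [Real.pi_ne_zero, I_ne_zero]
  have hmul : (2 * π * I : ℂ) * (f t - g t : ℝ) = 2 * π * I * m := by
    push_cast
    linear_combination hm
  exact_mod_cast (mul_left_cancel₀ h2piI hmul).symm

theorem variation_of_argument_le_general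
    (n : ℕ) (lam : Fin n → ℝ → ℝ)
    (hcont : ∀ k, ContinuousOn (lam k) (Set.Icc 0 1))
    (θ : ℝ → ℝ) (hθcont : ContinuousOn θ (Set.Icc 0 1))
    (hθ : ∀ t ∈ Set.Icc (0:ℝ) 1,
      Complex.exp (2 * Real.pi * Complex.I * (θ t)) =
        ∏ k : Fin n, (((lam k t : ℝ) : ℂ) + Complex.I) ^ 2 / (1 + ((lam k t : ℝ) : ℂ) ^ 2)) :
    |θ 1 - θ 0| ≤ n := by
  set φ : ℝ → ℝ := fun t => ∑ k, arg (lam k t + I) / π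
  have hφ_exp : ∀ t, exp (2 * π * I * φ t) =
      ∏ k : Fin n, ((lam k t : ℂ) + I) ^ 2 / (1 + (lam k t : ℂ) ^ 2) := by
    intro t
    simp only [φ, ofReal_sum, Finset.mul_sum, exp_sum, ofReal_add_I_sq_div_one_add_sq]
    refine Finset.prod_congr rfl fun k _ => congrArg exp ?_
    push_cast
    field_simp
  have hφ_cont : ContinuousOn φ (Icc 0 1) :=
    continuousOn_finsetSum _ fun k _ =>
      (continuous_arg_ofReal_add_I.comp_continuousOn (hcont k)).div_const π
  have hφ_mem : ∀ t, φ t ∈ Icc 0 (n : ℝ) := fun t => by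
    have hmem k := arg_ofReal_add_I_div_pi_mem_Icc (lam k t)
    refine ⟨Finset.sum_nonneg fun k _ => (hmem k).1, ?_⟩
    simpa using Finset.sum_le_card_nsmul Finset.univ _ 1 fun k _ => (hmem k).2
  have hlift := isPreconnected_Icc.sub_eq_sub_of_exp_eq hθcont hφ_cont
    (fun t ht => (hθ t ht).trans (hφ_exp t).symm) (left_mem_Icc.2 zero_le_one)
    (right_mem_Icc.2 zero_le_one)
  obtain ⟨h0, h0n⟩ := hφ_mem 0
  obtain ⟨h1, h1n⟩ := hφ_mem 1
  rw [abs_sub_le_iff]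
  constructor <;> linarith

/-- The variation of the argument (in turns) of the path
`t ↦ ∏_{k=1}^{n} (λ_k(t)+i)²/(1+λ_k(t)²)` on the unit circle, where the `λ_k` are
continuous and ordered `λ₁(t) ≤ ⋯ ≤ λₙ(t)`, is at most `n`: for any continuous lift `θ`
of `(1/2π)·arg` along the path, `|θ(1) − θ(0)| ≤ n`. -/
theorem variation_of_argument_le
    (n : ℕ) (lam : Fin n → ℝ → ℝ)
    (hcont : ∀ k, ContinuousOn (lam k) (Set.Icc 0 1))
    (hord : ∀ t ∈ Set.Icc (0:ℝ) 1, ∀ j k : Fin n, j ≤ k → lam j t ≤ lam k t)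
    (θ : ℝ → ℝ) (hθcont : ContinuousOn θ (Set.Icc 0 1))
    (hθ : ∀ t ∈ Set.Icc (0:ℝ) 1,
      Complex.exp (2 * Real.pi * Complex.I * (θ t)) =
        ∏ k : Fin n, (((lam k t : ℝ) : ℂ) + Complex.I) ^ 2 / (1 + ((lam k t : ℝ) : ℂ) ^ 2)) :
    |θ 1 - θ 0| ≤ n :=
  variation_of_argument_le_general n lam hcont θ hθcont hθ
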